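/- On any finite input graph, the Cumulative NDFS algorithm always terminates: every invocation of OuterDFS strictly increases the set Outer and every invocation of InnerDFS strictly increases the set Inner, and both sets are bounded by the finite set of states, so the computation cannot proceed infinitely. -/

import Mathlib

namespace PTASynth

open Relation

variable {L P : Type} {n : ℕ} [Fintype P]

/-! ### Affine expressions over parameters -/

/-- Affine expressions `z₀ + z₁p₁ + … + zₘpₘ` with integer coefficients. -/
structure AffExpr (P : Type) where
  const : ℤ
  coef : P → ℤ

noncomputable def AffExpr.eval (e : AffExpr P) (v : P → ℤ) : ℤ :=
  e.const + ∑ p, e.coef p * v p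

instance : Add (AffExpr P) :=
  ⟨fun e f => ⟨e.const + f.const, fun p => e.coef p + f.coef p⟩⟩

def AffExpr.ofInt (z : ℤ) : AffExpr P := ⟨z, fun _ => 0⟩

open Classical in
noncomputable def AffExpr.var (p : P) : AffExpr P :=
  ⟨0, fun q => if q = p then 1 else 0⟩

/-- `max_{lb,ub}(e)`: replace positively occurring parameters by their upper bound and
negatively occurring ones by their lower bound. -/
noncomputable def AffExpr.maxVal (e : AffExpr P) (lb ub : P → ℤ) : ℤ :=
  e.const + ∑ p, (if 0 ≤ e.coef p then e.coef p * ub p else e.coef p * lb p)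

/-- Extended affine expressions: `none` denotes `∞`. -/
abbrev EExpr (P : Type) := Option (AffExpr P)

noncomputable def EExpr.eval (e : EExpr P) (v : P → ℤ) : WithTop ℤ :=
  match e with
  | none => ⊤
  | some e => (AffExpr.eval e v : WithTop ℤ)

def EExpr.add : EExpr P → EExpr P → EExpr P
  | some e, some f => some (e + f)
  | _, _ => none

/-! ### Parameter constraints -/

/-- Relation symbols for parameter constraints. -/
inductive CRel | lt | le | ge | gt
deriving DecidableEq

def CRel.holds : CRel → WithTop ℤ → WithTop ℤ → Prop
  | .lt, a, b => a < b
  | .le, a, b => a ≤ b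
  | .ge, a, b => b ≤ a
  | .gt, a, b => b < a

def CRel.negRel : CRel → CRel
  | .lt => .ge
  | .le => .gt
  | .ge => .lt
  | .gt => .le

/-- A parameter constraint `e ∼ e'`. -/
structure Constr (P : Type) where
  lhs : EExpr P
  rel : CRel
  rhs : EExpr P

def Constr.neg (c : Constr P) : Constr P := ⟨c.lhs, c.rel.negRel, c.rhs⟩

def Constr.sat (c : Constr P) (v : P → ℤ) : Prop :=
  c.rel.holds (EExpr.eval c.lhs v) (EExpr.eval c.rhs v)

/-- `⟦C⟧`: the set of parameter valuations satisfying a constraint set. -/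
def csem (C : Set (Constr P)) : Set (P → ℤ) :=
  {v | ∀ c ∈ C, c.sat v}

/-- `C ⊨ c`: the constraint `c` covers the constraint set `C`. -/
def Covers (C : Set (Constr P)) (c : Constr P) : Prop :=
  ∀ v ∈ csem C, c.sat v

/-! ### Clock valuations -/

/-- Clock valuations over clocks `Fin (n+1)`, clock `0` is the zero clock `x₀`. -/
structure ClockVal (n : ℕ) where
  val : Fin (n + 1) → ℝ
  zero_eq : val 0 = 0
  nonneg : ∀ x, 0 ≤ val x

def ClockVal.zeroVal (n : ℕ) : ClockVal n := ⟨fun _ => 0, rfl, fun _ => le_refl 0⟩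

open Classical in
/-- `η⟨R⟩`: reset the clocks in `R` to `0`. -/
noncomputable def ClockVal.reset (η : ClockVal n) (R : Set (Fin (n + 1))) : ClockVal n where
  val x := if x = 0 ∨ x ∈ R then 0 else η.val x
  zero_eq := by simp
  nonneg x := by
    try dsimp only
    split
    · exact le_rfl
    · exact η.nonneg x

/-! ### Guards -/

/-- A bound `(≺, e)` with `≺ ∈ {≤, <}` (`true` means `≤`) and `e ∈ E(P) ∪ {∞}`. -/
abbrev Bnd (P : Type) := Bool × EExpr P

def Bnd.sat (b : Bnd P) (v : P → ℤ) (r : ℝ) : Prop :=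
  match b.2 with
  | none => True
  | some e => if b.1 then r ≤ (AffExpr.eval e v : ℝ) else r < (AffExpr.eval e v : ℝ)

/-- An atomic guard `xᵢ - xⱼ ≺ e`. -/
structure Atom (n : ℕ) (P : Type) where
  i : Fin (n + 1)
  j : Fin (n + 1)
  le : Bool
  e : EExpr P

/-- A guard is a finite conjunction of atomic guards. -/
abbrev Guard (n : ℕ) (P : Type) := List (Atom n P)

def Atom.sat (a : Atom n P) (v : P → ℤ) (η : ClockVal n) : Prop :=
  Bnd.sat (a.le, a.e) v (η.val a.i - η.val a.j)

def Guard.sat (g : Guard n P) (v : P → ℤ) (η : ClockVal n) : Prop :=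
  ∀ a ∈ g, a.sat v η

/-- Simple guards: one of the compared clocks is the zero clock and the bound is finite. -/
def Atom.Simple (a : Atom n P) : Prop := (a.i = 0 ∨ a.j = 0) ∧ a.e ≠ none

def Guard.Simple (g : Guard n P) : Prop := ∀ a ∈ g, a.Simple

/-! ### Parametric timed (Büchi) automata -/

/-- A parametric timed automaton. -/
structure PTA (L : Type) (n : ℕ) (P : Type) where
  l0 : L
  trans : Set (L × Guard n P × Set (Fin (n + 1)) × L)
  Inv : L → Guard n P
  simple_trans : ∀ t ∈ trans, Guard.Simple t.2.1
  simple_Inv : ∀ l, Guard.Simple (Inv l)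

/-- A parametric timed Büchi automaton. -/
structure PTBA (L : Type) (n : ℕ) (P : Type) extends PTA L n P where
  F : Set L

/-! ### Concrete semantics `⟦A⟧_v` -/

abbrev CState (L : Type) (n : ℕ) := L × ClockVal n

/-- Delay transition `(l,η) →^d (l,η+d)`. -/
def DelayStep (M : PTA L n P) (v : P → ℤ) (s : CState L n) (d : ℝ) (s' : CState L n) : Prop :=
  s'.1 = s.1 ∧ 0 ≤ d ∧ (∀ x : Fin (n + 1), x ≠ 0 → s'.2.val x = s.2.val x + d) ∧
    Guard.sat (M.Inv s'.1) v s'.2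

/-- Action transition `(l,η) →^act (l',η⟨R⟩)`. -/
def ActStep (M : PTA L n P) (v : P → ℤ) (s s' : CState L n) : Prop :=
  ∃ g R, (s.1, g, R, s'.1) ∈ M.trans ∧ Guard.sat g v s.2 ∧
    s'.2 = s.2.reset R ∧ Guard.sat (M.Inv s'.1) v s'.2

/-- `s →^{act}_d s'`: an action transition followed by a delay transition. -/
def ActD (M : PTA L n P) (v : P → ℤ) (s s' : CState L n) : Prop :=
  ∃ s'' d, ActStep M v s s'' ∧ DelayStep M v s'' d s'

/-- `s →^{act₁,…,act_k}_d s'`: composition of `→^{act}_d` steps where each step is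
labelled by the location of its source state. -/
def ActDSeq (M : PTA L n P) (v : P → ℤ) : List L → CState L n → CState L n → Prop
  | [], s, s' => s = s'
  | l :: ls, s, s' => ∃ s'', s.1 = l ∧ ActD M v s s'' ∧ ActDSeq M v ls s'' s'

/-- `s (→^{act₁,…,act_k}_d)* s'`: one or more iterations of `→^{act₁,…,act_k}_d`. -/
def ActDSeqPlus (M : PTA L n P) (v : P → ℤ) (acts : List L) :
    CState L n → CState L n → Prop :=
  TransGen (ActDSeq M v acts)

/-! ### Time-abstracting simulations -/

def IsTASim (M : PTA L n P) (v : P → ℤ) (R : CState L n → CState L n → Prop) : Prop :=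
  (∀ s1 s2 s1', R s1 s2 → ActStep M v s1 s1' →
      ∃ s2', ActStep M v s2 s2' ∧ R s1' s2') ∧
  (∀ s1 s2 s1' (d1 : ℝ), R s1 s2 → DelayStep M v s1 d1 s1' →
      ∃ d2 s2', DelayStep M v s2 d2 s2' ∧ R s1' s2')

def IsTABisim (M : PTA L n P) (v : P → ℤ) (R : CState L n → CState L n → Prop) : Prop :=
  IsTASim M v R ∧ IsTASim M v (flip R)

/-- `s ≼ s'`: some time-abstracting simulation relates `s` to `s'`. -/
def Sim (M : PTA L n P) (v : P → ℤ) (s s' : CState L n) : Prop :=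
  ∃ R, IsTASim M v R ∧ R s s'

/-! ### Runs of `⟦A⟧_v` -/

/-- A proper run: an infinite alternating sequence of delay and action transitions,
beginning with a delay, starting in the initial state. -/
def ProperRun (A : PTBA L n P) (v : P → ℤ) (s : ℕ → CState L n) (d : ℕ → ℝ) : Prop :=
  s 0 = (A.l0, ClockVal.zeroVal n) ∧
  ∀ i, ∃ s', DelayStep A.toPTA v (s i) (d i) s' ∧ ActStep A.toPTA v s' (s (i + 1))

def AcceptingRun (A : PTBA L n P) (v : P → ℤ) (s : ℕ → CState L n) (d : ℕ → ℝ) : Prop :=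
  ProperRun A v s d ∧ ∀ N, ∃ i, N ≤ i ∧ (s i).1 ∈ A.F

/-- A run is Zeno if the sum of all its delays is finite (bounded). -/
def ZenoD (d : ℕ → ℝ) : Prop := ∃ B : ℝ, ∀ N, ∑ i ∈ Finset.range N, d i ≤ B

def HasAccRun (A : PTBA L n P) (v : P → ℤ) : Prop := ∃ s d, AcceptingRun A v s d

/-- The PTBA has no Zeno accepting runs. -/
def NoZeno (A : PTBA L n P) : Prop :=
  ∀ (v : P → ℤ) s d, AcceptingRun A v s d → ¬ ZenoD d

/-! ### (Constrained) parametric difference bound matrices -/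

/-- A parametric difference bound matrix. -/
abbrev PDBM (n : ℕ) (P : Type) := Fin (n + 1) → Fin (n + 1) → Bnd P

/-- `⟦D⟧_v`. -/
def PDBM.sem (D : PDBM n P) (v : P → ℤ) : Set (ClockVal n) :=
  {η | ∀ i j, Bnd.sat (D i j) v (η.val i - η.val j)}

/-- A constrained PDBM `(C, D)`. -/
abbrev CPDBM (n : ℕ) (P : Type) := Set (Constr P) × PDBM n P

/-- `⟦C,D⟧ = {(v,η) | v ∈ ⟦C⟧ ∧ η ∈ ⟦D⟧_v}`. -/
def CPDBM.sem (cd : CPDBM n P) : Set ((P → ℤ) × ClockVal n) :=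
  {p | p.1 ∈ csem cd.1 ∧ p.2 ∈ PDBM.sem cd.2 p.1}

open Classical in
noncomputable def PDBM.upd (D : PDBM n P) (i j : Fin (n + 1)) (b : Bnd P) : PDBM n P :=
  fun i' j' => if i' = i ∧ j' = j then b else D i' j'

/-- The constraint `e_ij (≺_ij ⟹ ≺) e` used when applying the guard atom
`x_i - x_j ≺ e` to a PDBM. -/
def atomConstr (D : PDBM n P) (a : Atom n P) : Constr P :=
  ⟨(D a.i a.j).2, if !(D a.i a.j).1 || a.le then CRel.le else CRel.lt, a.e⟩

/-- Applying a guard atom to a constrained PDBM (possibly splitting the constraint set). -/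
inductive ApplyAtom : CPDBM n P → Atom n P → CPDBM n P → Prop
  | keep (C : Set (Constr P)) (D : PDBM n P) (a : Atom n P) :
      Covers C (atomConstr D a) → ApplyAtom (C, D) a (C, D)
  | repl (C : Set (Constr P)) (D : PDBM n P) (a : Atom n P) :
      Covers C (atomConstr D a).neg →
      ApplyAtom (C, D) a (C, PDBM.upd D a.i a.j (a.le, a.e))
  | splitKeep (C : Set (Constr P)) (D : PDBM n P) (a : Atom n P) :
      ¬ Covers C (atomConstr D a) → ¬ Covers C (atomConstr D a).neg →
      ApplyAtom (C, D) a (insert (atomConstr D a) C, D)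
  | splitRepl (C : Set (Constr P)) (D : PDBM n P) (a : Atom n P) :
      ¬ Covers C (atomConstr D a) → ¬ Covers C (atomConstr D a).neg →
      ApplyAtom (C, D) a (insert (atomConstr D a).neg C, PDBM.upd D a.i a.j (a.le, a.e))

/-- Applying a conjunction of guard atoms. -/
inductive ApplyGuard : CPDBM n P → Guard n P → CPDBM n P → Prop
  | nil (cd : CPDBM n P) : ApplyGuard cd [] cd
  | cons {cd cd' cd'' : CPDBM n P} {a : Atom n P} {g : Guard n P} :
      ApplyAtom cd a cd' → ApplyGuard cd' g cd'' → ApplyGuard cd (a :: g) cd''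

open Classical in
/-- `D⟨R⟩`: resetting a set of clocks. -/
noncomputable def PDBM.reset (D : PDBM n P) (R : Set (Fin (n + 1))) : PDBM n P :=
  fun i j =>
    if i = j then D i j
    else D (if i ∈ R then 0 else i) (if j ∈ R then 0 else j)

open Classical in
/-- `D↑`: the time successor (remove all upper bounds on clocks). -/
noncomputable def PDBM.up (D : PDBM n P) : PDBM n P :=
  fun i j => if i ≠ 0 ∧ j = 0 then ((false : Bool), (none : EExpr P)) else D i j

/-- The guard atom `x_i - x_j (≺_ik ∧ ≺_kj) (e_ik + e_kj)` used by the parametric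
Floyd–Warshall canonisation. -/
def fwAtom (D : PDBM n P) (k i j : Fin (n + 1)) : Atom n P :=
  ⟨i, j, (D i k).1 && (D k j).1, EExpr.add (D i k).2 (D k j).2⟩

/-- One step of the nondeterministic parametric Floyd–Warshall algorithm. -/
inductive FWStep : ℕ × ℕ × ℕ × CPDBM n P → ℕ × ℕ × ℕ × CPDBM n P → Prop
  | relax (k i j : Fin (n + 1)) (cd cd' : CPDBM n P) :
      ApplyAtom cd (fwAtom cd.2 k i j) cd' →
      FWStep ((k : ℕ), (i : ℕ), (j : ℕ), cd) ((k : ℕ), (i : ℕ), (j : ℕ) + 1, cd')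
  | nextI (k i : Fin (n + 1)) (cd : CPDBM n P) :
      FWStep ((k : ℕ), (i : ℕ), n + 1, cd) ((k : ℕ), (i : ℕ) + 1, 0, cd)
  | nextK (k : Fin (n + 1)) (cd : CPDBM n P) :
      FWStep ((k : ℕ), n + 1, 0, cd) ((k : ℕ) + 1, 0, 0, cd)

/-- `(C',D') ∈ (C,D)_c`: membership in the canonical set. -/
def Canon (cd cd' : CPDBM n P) : Prop :=
  ReflTransGen FWStep (0, 0, 0, cd) (n + 1, 0, 0, cd')

/-! ### Symbolic semantics `⟦A⟧` -/

abbrev SymState (L : Type) (n : ℕ) (P : Type) := L × CPDBM n P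

/-- The symbolic transition relation `⟹` of `⟦A⟧`. -/
def SymStep (A : PTBA L n P) (S S' : SymState L n P) : Prop :=
  ∃ g R, (S.1, g, R, S'.1) ∈ A.trans ∧
    ∃ cd1 cd2 cd3, ApplyGuard S.2 g cd1 ∧ Canon cd1 cd2 ∧
      ApplyGuard (cd2.1, PDBM.up (PDBM.reset cd2.2 R)) (A.Inv S'.1) cd3 ∧ Canon cd3 S'.2

/-- The constraints `lb(p) ≤ p ≤ ub(p)` for all parameters `p`. -/
noncomputable def boundC (lb ub : P → ℤ) : Set (Constr P) :=
  {c | ∃ p : P, c = ⟨some (AffExpr.var p), CRel.ge, some (AffExpr.ofInt (lb p))⟩ ∨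
                c = ⟨some (AffExpr.var p), CRel.le, some (AffExpr.ofInt (ub p))⟩}

/-- The PDBM with all entries `(0, ≤)`. -/
def E0 (n : ℕ) (P : Type) : PDBM n P := fun _ _ => ((true : Bool), some (AffExpr.ofInt 0))

/-- The initial symbolic states of `⟦A⟧`. -/
def SymInit (A : PTBA L n P) (lb ub : P → ℤ) : Set (SymState L n P) :=
  {S | S.1 = A.l0 ∧ ApplyGuard (boundC lb ub, PDBM.up (E0 n P)) (A.Inv A.l0) S.2}

/-- The (reachable) symbolic states of `⟦A⟧`. -/
def SymStates (A : PTBA L n P) (lb ub : P → ℤ) : Set (SymState L n P) :=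
  {S | ∃ S0 ∈ SymInit A lb ub, ReflTransGen (SymStep A) S0 S}

/-- `s ∈_v S`: the concrete state `s` is contained in the symbolic state `S` under `v`. -/
def InV (v : P → ℤ) (s : CState L n) (S : SymState L n P) : Prop :=
  s.1 = S.1 ∧ v ∈ csem S.2.1 ∧ s.2 ∈ PDBM.sem S.2.2 v

/-! ### Abstractions -/

abbrev Abstr (L : Type) (n : ℕ) (P : Type) := SymState L n P → Set (SymState L n P)

/-- `α` is an abstraction over `⟦A⟧`. -/
def IsAbstraction (A : PTBA L n P) (α : Abstr L n P) : Prop :=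
  (∀ S Q, Q ∈ α S → Q.1 = S.1 ∧ csem Q.2.1 ⊆ csem S.2.1 ∧
      CPDBM.sem (Q.2.1, S.2.2) ⊆ CPDBM.sem Q.2) ∧
  (∀ S Q, Q ∈ α S → ∀ (v : P → ℤ) (s : CState L n), InV v s Q →
      ∃ s', InV v s' S ∧ Sim A.toPTA v s s')

/-- The transition relation `⟹^α` of the induced transition system `⟦A⟧^α`. -/
def AbsStep (A : PTBA L n P) (α : Abstr L n P) (Q Q' : SymState L n P) : Prop :=
  ∃ S, SymStep A Q S ∧ Q' ∈ α S

/-- The initial states of `⟦A⟧^α`. -/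
def AbsInit (A : PTBA L n P) (lb ub : P → ℤ) (α : Abstr L n P) : Set (SymState L n P) :=
  {Q | ∃ S ∈ SymInit A lb ub, Q ∈ α S}

/-- The states of `⟦A⟧^α`. -/
def AbsStates (A : PTBA L n P) (lb ub : P → ℤ) (α : Abstr L n P) : Set (SymState L n P) :=
  {Q | ∃ Q0 ∈ AbsInit A lb ub α, ReflTransGen (AbsStep A α) Q0 Q}

/-- The semantic content `(l, ⟦C⟧, ⟦C,D⟧)` of a symbolic state. -/
def semClass (Q : SymState L n P) : L × Set (P → ℤ) × Set ((P → ℤ) × ClockVal n) :=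
  (Q.1, csem Q.2.1, CPDBM.sem Q.2)

/-- `α` is a finite abstraction: the induced state space is finite (up to semantics). -/
def FiniteAbs (A : PTBA L n P) (lb ub : P → ℤ) (α : Abstr L n P) : Prop :=
  (semClass '' AbsStates A lb ub α).Finite

/-- There is an accepting run of `⟦A⟧^α` respecting `v`. -/
def AbsAccRun (A : PTBA L n P) (lb ub : P → ℤ) (α : Abstr L n P) (v : P → ℤ) : Prop :=
  ∃ ρ : ℕ → SymState L n P, ρ 0 ∈ AbsInit A lb ub α ∧
    (∀ i, AbsStep A α (ρ i) (ρ (i + 1))) ∧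
    (∀ i, v ∈ csem (ρ i).2.1) ∧
    (∀ N, ∃ i, N ≤ i ∧ (ρ i).1 ∈ A.F)

/-- `Q ⟹^α … ⟹^α Q'` via transitions labelled by the locations of their source states. -/
def AbsSeq (A : PTBA L n P) (α : Abstr L n P) :
    List L → SymState L n P → SymState L n P → Prop
  | [], Q, Q' => Q = Q'
  | l :: ls, Q, Q'' => ∃ Q', Q.1 = l ∧ AbsStep A α Q Q' ∧ AbsSeq A α ls Q' Q''

/-! ### The pk-extrapolation -/

def guardsOf (A : PTBA L n P) : Set (Guard n P) :=
  {g | (∃ t ∈ A.trans, t.2.1 = g) ∨ (∃ l, A.Inv l = g)}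

/-- The affine expressions compared with the clock `x` in a guard or invariant of `A`. -/
def comparedWith (A : PTBA L n P) (x : Fin (n + 1)) : Set (AffExpr P) :=
  {e | ∃ g ∈ guardsOf A, ∃ a ∈ g, (a.i = x ∨ a.j = x) ∧ a.e = some e}

/-- `M(x)`: the maximal constant with which the clock `x` is compared. -/
noncomputable def Mmax (A : PTBA L n P) (lb ub : P → ℤ) (x : Fin (n + 1)) : ℤ :=
  sSup ((fun e => AffExpr.maxVal e lb ub) '' comparedWith A x)

/-- The four possible ways the pk-extrapolation treats the entry `(i,j)` with maximal
constants `Mi = M(x_i)` and `Mj = M(x_j)`. -/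
def PkEntry (Mi Mj : ℤ) (old new : Bnd P) (c : Constr P) : Prop :=
  (new = old ∧ c = ⟨old.2, CRel.le, some (AffExpr.ofInt Mi)⟩) ∨
  (new = ((false : Bool), (none : EExpr P)) ∧ c = ⟨old.2, CRel.gt, some (AffExpr.ofInt Mi)⟩) ∨
  (new = old ∧ c = ⟨old.2, CRel.ge, some (AffExpr.ofInt (-Mj))⟩) ∨
  (new = ((false : Bool), some (AffExpr.ofInt (-Mj))) ∧
    c = ⟨old.2, CRel.lt, some (AffExpr.ofInt (-Mj))⟩)

/-- The pk-extrapolation `α_pk`. -/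
noncomputable def pkExtra (A : PTBA L n P) (lb ub : P → ℤ) : Abstr L n P :=
  fun S => {Q | Q.1 = S.1 ∧
    ∃ f : Fin (n + 1) → Fin (n + 1) → Bnd P × Constr P,
      (∀ i j, PkEntry (Mmax A lb ub i) (Mmax A lb ub j) (S.2.2 i j) (f i j).1 (f i j).2) ∧
      (∀ i j, Q.2.2 i j = (f i j).1) ∧
      Q.2.1 = S.2.1 ∪ {c | ∃ i j, c = (f i j).2}}

/-! ### Region equivalence -/

/-- The maximal constant to which the clock `x` is compared in `A|v`. -/
noncomputable def cmax (A : PTBA L n P) (v : P → ℤ) (x : Fin (n + 1)) : ℤ :=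
  sSup ((fun e => AffExpr.eval e v) '' comparedWith A x)

/-- The standard region equivalence `≡_{A|v}` on the states of `⟦A⟧_v`. -/
def RegionEquiv (A : PTBA L n P) (v : P → ℤ) (s s' : CState L n) : Prop :=
  s.1 = s'.1 ∧
  (∀ x : Fin (n + 1),
      ((cmax A v x : ℝ) < s.2.val x ∧ (cmax A v x : ℝ) < s'.2.val x) ∨
      (⌊s.2.val x⌋ = ⌊s'.2.val x⌋ ∧ (Int.fract (s.2.val x) = 0 ↔ Int.fract (s'.2.val x) = 0))) ∧
  (∀ x y : Fin (n + 1),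
      s.2.val x ≤ (cmax A v x : ℝ) → s.2.val y ≤ (cmax A v y : ℝ) →
      (Int.fract (s.2.val x) ≤ Int.fract (s.2.val y) ↔
        Int.fract (s'.2.val x) ≤ Int.fract (s'.2.val y)))

/-! ### The Cumulative NDFS algorithm -/

variable {S V : Type}

/-- A finite Büchi graph whose states carry monotone sets of parameter valuations. -/
structure NGraph (S V : Type) where
  succ : S → List S
  init : S
  acc : S → Prop
  C : S → Set V
  mono : ∀ s s', s' ∈ succ s → C s' ⊆ C s

/-- Control frames of the Cumulative NDFS machine. -/
inductive NFrame (S : Type)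
  | callOuter (s : S)
  | outer (s : S) (rest : List S)
  | outerPop (s : S)
  | callInner (s : S)
  | inner (s : S) (rest : List S)

/-- Configurations of the Cumulative NDFS machine. -/
structure NConfig (S V : Type) where
  found : Set V
  outer : Set S
  inner : Set S
  stack : Set S
  ctrl : List (NFrame S)

/-- Small-step semantics of the Cumulative NDFS algorithm. -/
inductive NStep (G : NGraph S V) : NConfig S V → NConfig S V → Prop
  | callOuter (F O I St s k) :
      NStep G ⟨F, O, I, St, .callOuter s :: k⟩
              ⟨F, insert s O, I, insert s St, .outer s (G.succ s) :: k⟩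
  | outerSkip (F O I St s s' rest k) :
      (s' ∈ O ∨ s' ∈ St ∨ G.C s' ⊆ F) →
      NStep G ⟨F, O, I, St, .outer s (s' :: rest) :: k⟩
              ⟨F, O, I, St, .outer s rest :: k⟩
  | outerRec (F O I St s s' rest k) :
      s' ∉ O → s' ∉ St → ¬ G.C s' ⊆ F →
      NStep G ⟨F, O, I, St, .outer s (s' :: rest) :: k⟩
              ⟨F, O, I, St, .callOuter s' :: .outer s rest :: k⟩
  | outerAcc (F O I St s k) :
      G.acc s → ¬ G.C s ⊆ F →
      NStep G ⟨F, O, I, St, .outer s [] :: k⟩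
              ⟨F, O, I, St, .callInner s :: .outerPop s :: k⟩
  | outerDone (F O I St s k) :
      ¬ (G.acc s ∧ ¬ G.C s ⊆ F) →
      NStep G ⟨F, O, I, St, .outer s [] :: k⟩ ⟨F, O, I, St \ {s}, k⟩
  | outerPop (F O I St s k) :
      NStep G ⟨F, O, I, St, .outerPop s :: k⟩ ⟨F, O, I, St \ {s}, k⟩
  | callInner (F O I St s k) :
      NStep G ⟨F, O, I, St, .callInner s :: k⟩
              ⟨F, O, insert s I, St, .inner s (G.succ s) :: k⟩
  | innerFound (F O I St s s' rest k) :
      s' ∈ St →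
      NStep G ⟨F, O, I, St, .inner s (s' :: rest) :: k⟩ ⟨F ∪ G.C s', O, I, St, k⟩
  | innerRec (F O I St s s' rest k) :
      s' ∉ St → s' ∉ I → ¬ G.C s' ⊆ F →
      NStep G ⟨F, O, I, St, .inner s (s' :: rest) :: k⟩
              ⟨F, O, I, St, .callInner s' :: .inner s rest :: k⟩
  | innerSkip (F O I St s s' rest k) :
      s' ∉ St → (s' ∈ I ∨ G.C s' ⊆ F) →
      NStep G ⟨F, O, I, St, .inner s (s' :: rest) :: k⟩ ⟨F, O, I, St, .inner s rest :: k⟩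
  | innerDone (F O I St s k) :
      NStep G ⟨F, O, I, St, .inner s [] :: k⟩ ⟨F, O, I, St, k⟩

/-- The initial configuration of the Cumulative NDFS algorithm. -/
def initConfig (G : NGraph S V) : NConfig S V := ⟨∅, ∅, ∅, ∅, [.callOuter G.init]⟩

/-- The edge relation of the graph. -/
def Edge (G : NGraph S V) (s s' : S) : Prop := s' ∈ G.succ s

/-- One edge of a cycle under the valuation `v`: both endpoints carry `v`. -/
def StepUnder (G : NGraph S V) (v : V) (s s' : S) : Prop :=
  s' ∈ G.succ s ∧ v ∈ G.C s ∧ v ∈ G.C s'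

/-- The step from `c` to `c'` backtracks (in `OuterDFS`) from the state `q`. -/
def Backtracks (G : NGraph S V) (q : S) (c c' : NConfig S V) : Prop :=
  NStep G c c' ∧
    ((∃ k, c.ctrl = NFrame.outer q [] :: k ∧ c'.ctrl = k) ∨
     (∃ k, c.ctrl = NFrame.outerPop q :: k))

/-! Termination is witnessed by a lexicographic potential: the number of states outside
`Outer`, the number outside `Inner`, the number of pending `OuterDFS` frames, and the length of
the successor lists still to be scanned. An `OuterDFS` call is issued only for a state outside
`Outer` and is executed at once, so it enlarges `Outer`. An `InnerDFS` call on a state outside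
`Inner` enlarges `Inner`; one on a visited state can only be a seed call, and is charged to the
`OuterDFS` frame it replaced. Every other step shortens a successor list or pops a frame. -/

lemma ncard_compl_insert_lt [Finite S] {A : Set S} {s : S} (h : s ∉ A) :
    (insert s A)ᶜ.ncard < Aᶜ.ncard :=
  Set.ncard_lt_ncard (compl_lt_compl_iff_lt.mpr (Set.ssubset_insert h))

namespace NFrame

def work : NFrame S → ℕ
  | .outer _ r => r.length + 2
  | .outerPop _ => 1
  | .inner _ r => r.length + 1
  | _ => 0

open Classical in
noncomputable def pendingSeeds (I : Set S) : NFrame S → ℕ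
  | .outer _ _ => 1
  | .callInner s => if s ∈ I then 1 else 0
  | _ => 0

end NFrame

namespace NConfig

structure OuterCallsFresh (c : NConfig S V) : Prop where
  not_mem_tail : ∀ s, NFrame.callOuter s ∉ c.ctrl.tail
  not_mem_outer : ∀ s k, c.ctrl = NFrame.callOuter s :: k → s ∉ c.outer

noncomputable def potential (c : NConfig S V) : ℕ ×ₗ ℕ ×ₗ ℕ ×ₗ ℕ :=
  toLex (c.outerᶜ.ncard, toLex (c.innerᶜ.ncard,
    toLex ((c.ctrl.map (NFrame.pendingSeeds c.inner)).sum, (c.ctrl.map NFrame.work).sum)))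

end NConfig

open NConfig

lemma outerCallsFresh_initConfig (G : NGraph S V) : (initConfig G).OuterCallsFresh :=
  ⟨by simp [initConfig], by simp [initConfig]⟩

lemma NStep.outerCallsFresh {G : NGraph S V} {c c' : NConfig S V} (h : NStep G c c')
    (hc : c.OuterCallsFresh) : c'.OuterCallsFresh := by
  obtain ⟨htail, -⟩ := hc
  cases h with
  | outerRec F O I St s s' rest k hO => exact ⟨by simpa using htail, by simpa using hO⟩
  | outerDone | outerPop | innerFound | innerDone =>
    exact ⟨fun t ht => htail t (List.mem_of_mem_tail ht),
      fun t k' hk => (htail t (by simp only at hk; simp [hk])).elim⟩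
  | _ => exact ⟨by simpa using htail, by simp⟩

lemma NStep.potential_lt [Finite S] {G : NGraph S V} {c c' : NConfig S V} (h : NStep G c c')
    (hc : c.OuterCallsFresh) : c'.potential < c.potential := by
  simp only [potential, Prod.Lex.toLex_lt_toLex]
  cases h with
  | callOuter F O I St s k => exact .inl (ncard_compl_insert_lt (hc.not_mem_outer s k rfl))
  | callInner F O I St s k =>
    by_cases hs : s ∈ I
    · simp [hs, NFrame.pendingSeeds]
    · exact .inr ⟨rfl, .inl (ncard_compl_insert_lt hs)⟩
  | innerRec F O I St s s' rest k _ hI => simp [NFrame.pendingSeeds, NFrame.work, hI]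
  | outerAcc F O I St s k =>
    by_cases hs : s ∈ I <;> simp [NFrame.pendingSeeds, NFrame.work, hs]
  | _ => simp [NFrame.pendingSeeds, NFrame.work]

lemma exists_nstep_of_ctrl_ne_nil (G : NGraph S V) {c : NConfig S V} (hc : c.ctrl ≠ []) :
    ∃ c', NStep G c c' := by
  obtain ⟨F, O, I, St, _ | ⟨f, k⟩⟩ := c
  · exact absurd rfl hc
  cases f with
  | callOuter s => exact ⟨_, .callOuter F O I St s k⟩
  | outer s r =>
    cases r with
    | nil =>
      by_cases h : G.acc s ∧ ¬ G.C s ⊆ F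
      · exact ⟨_, .outerAcc F O I St s k h.1 h.2⟩
      · exact ⟨_, .outerDone F O I St s k h⟩
    | cons s' rest =>
      by_cases h : s' ∈ O ∨ s' ∈ St ∨ G.C s' ⊆ F
      · exact ⟨_, .outerSkip F O I St s s' rest k h⟩
      · simp only [not_or] at h
        exact ⟨_, .outerRec F O I St s s' rest k h.1 h.2.1 h.2.2⟩
  | outerPop s => exact ⟨_, .outerPop F O I St s k⟩
  | callInner s => exact ⟨_, .callInner F O I St s k⟩
  | inner s r =>
    cases r with
    | nil => exact ⟨_, .innerDone F O I St s k⟩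
    | cons s' rest =>
      by_cases hSt : s' ∈ St
      · exact ⟨_, .innerFound F O I St s s' rest k hSt⟩
      by_cases h : s' ∈ I ∨ G.C s' ⊆ F
      · exact ⟨_, .innerSkip F O I St s s' rest k hSt h⟩
      · simp only [not_or] at h
        exact ⟨_, .innerRec F O I St s s' rest k hSt h.1 h.2⟩

namespace NConfig.OuterCallsFresh

variable [Finite S] {G : NGraph S V}

lemma not_infinite_run {f : ℕ → NConfig S V} (h0 : (f 0).OuterCallsFresh)
    (hf : ∀ i, NStep G (f i) (f (i + 1))) : False := by
  have hfresh : ∀ i, (f i).OuterCallsFresh := fun i => by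
    induction i with
    | zero => exact h0
    | succ i ih => exact (hf i).outerCallsFresh ih
  exact not_strictAnti_of_wellFoundedLT (potential ∘ f)
    (strictAnti_nat_of_succ_lt fun i => (hf i).potential_lt (hfresh i))

lemma exists_terminal {c : NConfig S V} (hc : c.OuterCallsFresh) :
    ∃ c', ReflTransGen (NStep G) c c' ∧ c'.ctrl = [] := by
  induction c using (InvImage.wf potential wellFounded_lt).induction with
  | _ c ih =>
    by_cases hdone : c.ctrl = []
    · exact ⟨c, .refl, hdone⟩
    obtain ⟨c', hstep⟩ := exists_nstep_of_ctrl_ne_nil G hdone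
    obtain ⟨d, hd, hterm⟩ := ih c' (hstep.potential_lt hc) (hstep.outerCallsFresh hc)
    exact ⟨d, .head hstep hd, hterm⟩

end NConfig.OuterCallsFresh

/-- On any finite input graph the Cumulative NDFS algorithm always
terminates: the computation cannot proceed infinitely, and a final configuration is
reached. -/
theorem cumulative_ndfs_terminates
    [Finite S] (G : NGraph S V) :
    (¬ ∃ f : ℕ → NConfig S V, f 0 = initConfig G ∧ ∀ i, NStep G (f i) (f (i + 1))) ∧
    ∃ c : NConfig S V, ReflTransGen (NStep G) (initConfig G) c ∧ c.ctrl = [] :=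
  ⟨fun ⟨_, h0, hf⟩ => (h0 ▸ outerCallsFresh_initConfig G).not_infinite_run hf,
    (outerCallsFresh_initConfig G).exists_terminal⟩

end PTASynth
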